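/- Let 0 → K →^φ G →^π H → 0 be a short exact sequence of abelian groups (φ injective, π surjective, and the image of φ equals the kernel of π), and let A be a G-graded ring with grading components (A_g)_{g∈G}. Suppose that the induced H-grading of A, given by B_h := ⊕_{g ∈ π^{-1}(h)} A_g, is strong, and that the induced K-grading of the subring A^K := ⊕_{k∈K} A_{φ(k)}, given by the components A_{φ(k)}, is strong. Then the G-grading of A is strong, i.e. A_g · A_{g'} = A_{g+g'} for all g, g' ∈ G. -/

import Mathlib

open Pointwise

/-- A `G`-grading of a ring `A` by additive subgroups: `A` is the internal direct
sum of the components, `1` lies in the degree-zero component, and the additive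
subgroup generated by products of elements of degrees `g` and `h` is contained in
the component of degree `g + h`. -/
structure IsRingGrading {G A : Type*} [AddCommGroup G] [DecidableEq G] [Ring A]
    (𝒜 : G → AddSubgroup A) : Prop where
  isInternal : DirectSum.IsInternal 𝒜
  one_mem : (1 : A) ∈ 𝒜 0
  mul_le : ∀ g h : G,
    AddSubgroup.closure ((𝒜 g : Set A) * (𝒜 h : Set A)) ≤ 𝒜 (g + h)

/-! Pass to `ℤ`-submodules, where products of components form a monoid. For a grading `M`
with `1 ∈ M 0`, strength is equivalent to `1 ∈ M g * M (-g)` for all `g`. Strength of the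
`H`-grading puts `1` in the product of the components of degrees `π g` and `-π g`, which is
a sum of products `M g₁ * M g₂` with `π g₁ = π g`, `π g₂ = -π g`. When `g₁ + g₂ = 0`, the
`K`-strength gives `1 ∈ M (-d) * M d` for `d = g₁ - g ∈ φ K`, so
`M g₁ * M (-g₁) ⊆ M g₁ * M (-d) * M d * M (-g₁) ⊆ M g * M (-g)`; the remaining products
have nonzero degree. Comparing degree-`0` parts, `1 ∈ M g * M (-g)`. -/

theorem AddSubgroup.toIntSubmodule_closure_mul {A : Type*} [Ring A] (s t : AddSubgroup A) :
    (closure ((s : Set A) * (t : Set A))).toIntSubmodule = s.toIntSubmodule * t.toIntSubmodule := by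
  rw [toIntSubmodule_closure, ← Submodule.span_mul_span, ← coe_toIntSubmodule s,
    ← coe_toIntSubmodule t, Submodule.span_eq, Submodule.span_eq]

theorem iSupIndep.mem_of_mem_sup_iSup_ne {ι R M : Type*} [Ring R] [AddCommGroup M] [Module R M]
    {p : ι → Submodule R M} (hp : iSupIndep p) {i : ι} {S : Submodule R M} (hS : S ≤ p i)
    {x : M} (hx : x ∈ p i) (hxS : x ∈ S ⊔ ⨆ j ≠ i, p j) : x ∈ S := by
  obtain ⟨s, hs, t, ht, rfl⟩ := Submodule.mem_sup.mp hxS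
  have ht' : t ∈ p i := by simpa using sub_mem hx (hS hs)
  rwa [Submodule.disjoint_def.mp (hp i) t ht' ht, add_zero]

namespace Submodule

section

variable {R A G H : Type*} [CommSemiring R] [Semiring A] [Algebra R A]
  [AddCommGroup G] [AddCommGroup H]

def inducedGrading (π : G →+ H) (M : G → Submodule R A) (h : H) : Submodule R A :=
  ⨆ (g) (_ : π g = h), M g

variable {M : G → Submodule R A} [SetLike.GradedMonoid M]

theorem mul_le_of_gradedMonoid (a b : G) : M a * M b ≤ M (a + b) :=
  mul_le.2 fun _ hx _ hy => SetLike.mul_mem_graded hx hy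

theorem mul_eq_of_one_mem_mul_neg (h1 : ∀ g, (1 : A) ∈ M g * M (-g)) (g g' : G) :
    M g * M g' = M (g + g') := by
  refine le_antisymm (mul_le_of_gradedMonoid g g') ?_
  have hone : 1 ≤ M (-g') * M g' := one_le.2 (by simpa using h1 (-g'))
  calc M (g + g') = M (g + g') * 1 := (mul_one _).symm
    _ ≤ M (g + g') * (M (-g') * M g') := mul_le_mul_right hone _
    _ = M (g + g') * M (-g') * M g' := (mul_assoc _ _ _).symm
    _ ≤ M (g + g' + -g') * M g' := mul_le_mul_left (mul_le_of_gradedMonoid _ _) _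
    _ = M g * M g' := by rw [add_neg_cancel_right]

theorem mul_neg_le_mul_neg_of_one_mem {d : G} (hd : (1 : A) ∈ M (-d) * M d) (g : G) :
    M (g + d) * M (-(g + d)) ≤ M g * M (-g) := by
  have hone : 1 ≤ M (-d) * M d := one_le.2 hd
  calc M (g + d) * M (-(g + d)) = M (g + d) * 1 * M (-(g + d)) := by rw [mul_one]
    _ ≤ M (g + d) * (M (-d) * M d) * M (-(g + d)) :=
      mul_le_mul_left (mul_le_mul_right hone _) _
    _ = M (g + d) * M (-d) * (M d * M (-(g + d))) := by simp only [mul_assoc]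
    _ ≤ M (g + d + -d) * M (d + -(g + d)) :=
      mul_le_mul' (mul_le_of_gradedMonoid _ _) (mul_le_of_gradedMonoid _ _)
    _ = M g * M (-g) := by congr 2 <;> abel

theorem inducedGrading_mul_neg_le {π : G →+ H} (hK : ∀ d ∈ π.ker, (1 : A) ∈ M (-d) * M d)
    (g : G) :
    inducedGrading π M (π g) * inducedGrading π M (-π g) ≤ M g * M (-g) ⊔ ⨆ c ≠ 0, M c := by
  simp only [inducedGrading, iSup_mul, mul_iSup]
  refine iSup₂_le fun g₂ hg₂ => iSup₂_le fun g₁ hg₁ => ?_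
  by_cases hc : g₁ + g₂ = 0
  · obtain rfl : g₂ = -g₁ := eq_neg_of_add_eq_zero_right hc
    have hd : g₁ - g ∈ π.ker := by rw [AddMonoidHom.mem_ker, map_sub, hg₁, sub_self]
    refine le_sup_of_le_left ?_
    simpa using mul_neg_le_mul_neg_of_one_mem (hK _ hd) g
  · exact le_sup_of_le_right ((mul_le_of_gradedMonoid g₁ g₂).trans
      (le_iSup₂ (f := fun c (_ : c ≠ 0) => M c) _ hc))

end

section

variable {R A G H : Type*} [CommRing R] [Ring A] [Algebra R A] [AddCommGroup G] [AddCommGroup H]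
  {M : G → Submodule R A} [SetLike.GradedMonoid M]

theorem one_mem_mul_neg_of_extension (hind : iSupIndep M) {π : G →+ H}
    (hK : ∀ d ∈ π.ker, (1 : A) ∈ M (-d) * M d)
    (hH : ∀ h, (1 : A) ∈ inducedGrading π M h * inducedGrading π M (-h)) (g : G) :
    (1 : A) ∈ M g * M (-g) :=
  hind.mem_of_mem_sup_iSup_ne (by simpa using mul_le_of_gradedMonoid (M := M) g (-g))
    SetLike.GradedOne.one_mem (inducedGrading_mul_neg_le hK g (hH (π g)))

end

end Submodule

theorem IsRingGrading.gradedMonoid_toIntSubmodule {G A : Type*} [AddCommGroup G] [DecidableEq G]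
    [Ring A] {𝒜 : G → AddSubgroup A} (h𝒜 : IsRingGrading 𝒜) :
    SetLike.GradedMonoid fun g => (𝒜 g).toIntSubmodule where
  one_mem := h𝒜.one_mem
  mul_mem g g' _ _ ha hb := h𝒜.mul_le g g' (AddSubgroup.subset_closure (Set.mul_mem_mul ha hb))

theorem strong_grading_of_extension_general {K G H A : Type*}
    [AddCommGroup K] [AddCommGroup G] [DecidableEq G] [AddCommGroup H] [Ring A]
    (φ : K →+ G) (π : G →+ H)
    (hexact : φ.range = π.ker)
    (𝒜 : G → AddSubgroup A) (h𝒜 : IsRingGrading 𝒜)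
    (ℬ : H → AddSubgroup A)
    (hℬ : ∀ h : H,
      ℬ h = AddSubgroup.closure (⋃ g ∈ {g : G | π g = h}, (𝒜 g : Set A)))
    (hstrongH : ∀ h h' : H,
      AddSubgroup.closure ((ℬ h : Set A) * (ℬ h' : Set A)) = ℬ (h + h'))
    (hstrongK : ∀ k k' : K,
      AddSubgroup.closure ((𝒜 (φ k) : Set A) * (𝒜 (φ k') : Set A))
        = 𝒜 (φ (k + k'))) :
    ∀ g g' : G,
      AddSubgroup.closure ((𝒜 g : Set A) * (𝒜 g' : Set A)) = 𝒜 (g + g') := by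
  set M : G → Submodule ℤ A := fun g => (𝒜 g).toIntSubmodule
  have : SetLike.GradedMonoid M := h𝒜.gradedMonoid_toIntSubmodule
  have hind : iSupIndep M := h𝒜.isInternal.addSubgroup_iSupIndep.map_orderIso _
  have hK : ∀ d ∈ π.ker, (1 : A) ∈ M (-d) * M d := by
    rintro _ hd
    obtain ⟨k, rfl⟩ := hexact ▸ hd
    rw [← map_neg, ← AddSubgroup.toIntSubmodule_closure_mul, hstrongK, neg_add_cancel, map_zero]
    exact h𝒜.one_mem
  have hℬM : ∀ h, (ℬ h).toIntSubmodule = Submodule.inducedGrading π M h := fun h => by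
    rw [hℬ, AddSubgroup.toIntSubmodule_closure, Submodule.span_iUnion₂]
    exact iSup_congr fun g => iSup_congr fun _ => Submodule.span_eq (M g)
  have hH : ∀ h, (1 : A) ∈ Submodule.inducedGrading π M h * Submodule.inducedGrading π M (-h) := by
    intro h
    rw [← hℬM, ← hℬM, ← AddSubgroup.toIntSubmodule_closure_mul, hstrongH, add_neg_cancel, hℬM]
    exact Submodule.mem_iSup_of_mem 0 (Submodule.mem_iSup_of_mem (map_zero π) h𝒜.one_mem)
  intro g g'
  apply AddSubgroup.toIntSubmodule.injective
  rw [AddSubgroup.toIntSubmodule_closure_mul]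
  exact Submodule.mul_eq_of_one_mem_mul_neg
    (Submodule.one_mem_mul_neg_of_extension hind hK hH) g g'

/-- Strong gradings are preserved under extensions of abelian groups: given a
short exact sequence `0 → K → G → H → 0` and a `G`-graded ring `A`, if the
induced `H`-grading of `A` is strong and the induced `K`-grading of the subring
`A^K = ⊕_{k ∈ K} A_{φ k}` is strong, then the `G`-grading of `A` is strong. -/
theorem strong_grading_of_extension {K G H A : Type*}
    [AddCommGroup K] [AddCommGroup G] [DecidableEq G] [AddCommGroup H] [Ring A]
    (φ : K →+ G) (π : G →+ H)
    (hφ : Function.Injective φ) (hπ : Function.Surjective π)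
    (hexact : φ.range = π.ker)
    (𝒜 : G → AddSubgroup A) (h𝒜 : IsRingGrading 𝒜)
    (ℬ : H → AddSubgroup A)
    (hℬ : ∀ h : H,
      ℬ h = AddSubgroup.closure (⋃ g ∈ {g : G | π g = h}, (𝒜 g : Set A)))
    (hstrongH : ∀ h h' : H,
      AddSubgroup.closure ((ℬ h : Set A) * (ℬ h' : Set A)) = ℬ (h + h'))
    (hstrongK : ∀ k k' : K,
      AddSubgroup.closure ((𝒜 (φ k) : Set A) * (𝒜 (φ k') : Set A))
        = 𝒜 (φ (k + k'))) :
    ∀ g g' : G,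
      AddSubgroup.closure ((𝒜 g : Set A) * (𝒜 g' : Set A)) = 𝒜 (g + g') :=
  strong_grading_of_extension_general φ π hexact 𝒜 h𝒜 ℬ hℬ hstrongH hstrongK
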